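/- Lagrangian dual transform (single-ratio case): for fixed $A > 0$ and $B > 0$, the function $t \mapsto \log_2(1 + t) - \frac{t}{\ln 2} + \frac{(1+t)A}{(A + B)\ln 2}$ over $t \geq 0$ attains its maximum at $t^\star = A/B$, and the maximum value equals $\log_2(1 + A/B)$. -/
import Mathlib


open Real

/-- Lagrangian dual transform (single-ratio case): for fixed `A, B > 0`,
`t ↦ logb 2 (1+t) - t/ln 2 + (1+t)A/((A+B) ln 2)` over `t ≥ 0` attains its maximum at
`t⋆ = A/B`, with maximal value `logb 2 (1 + A/B)`. -/
theorem lagrangian_dual_transform (A B : ℝ) (hA : 0 < A) (hB : 0 < B) :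
    (∀ t : ℝ, 0 ≤ t →
      Real.logb 2 (1 + t) - t / Real.log 2 + (1 + t) * A / ((A + B) * Real.log 2)
        ≤ Real.logb 2 (1 + A / B) - (A / B) / Real.log 2
            + (1 + A / B) * A / ((A + B) * Real.log 2)) ∧
    (Real.logb 2 (1 + A / B) - (A / B) / Real.log 2
        + (1 + A / B) * A / ((A + B) * Real.log 2) = Real.logb 2 (1 + A / B)) := by
  have hAB : 0 < A + B := by linarith
  have hL : 0 < Real.log 2 := Real.log_pos (by norm_num)
  have hcancel : (1 + A / B) * A / ((A + B) * Real.log 2) = (A / B) / Real.log 2 := by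
    field_simp
    ring
  have heq : Real.logb 2 (1 + A / B) - (A / B) / Real.log 2
        + (1 + A / B) * A / ((A + B) * Real.log 2) = Real.logb 2 (1 + A / B) := by
    rw [hcancel]; ring
  refine ⟨?_, heq⟩
  intro t ht
  rw [heq]
  have h1t : 0 < 1 + t := by linarith
  have hx : 0 < (1 + t) * B / (A + B) := by positivity
  have key : Real.log ((1 + t) * B / (A + B)) ≤ (1 + t) * B / (A + B) - 1 :=
    Real.log_le_sub_one_of_pos hx
  have hs1 : (0:ℝ) < 1 + A / B := by positivity
  have hlogeq : Real.log ((1 + t) * B / (A + B))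
      = Real.log (1 + t) - Real.log (1 + A / B) := by
    have h1 : 1 + A / B = (A + B) / B := by field_simp; ring
    rw [h1, Real.log_div (by positivity) hB.ne',
      Real.log_div (by positivity) hAB.ne',
      Real.log_mul h1t.ne' hB.ne']
    ring
  have hrhs : (1 + t) * B / (A + B) - 1 = t - (1 + t) * A / (A + B) := by
    field_simp
    ring
  have H : Real.log (1 + t) - t + (1 + t) * A / (A + B) ≤ Real.log (1 + A / B) := by
    rw [hlogeq, hrhs] at key
    linarith
  have e1 : Real.logb 2 (1 + t) - t / Real.log 2 + (1 + t) * A / ((A + B) * Real.log 2)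
      = (Real.log (1 + t) - t + (1 + t) * A / (A + B)) / Real.log 2 := by
    rw [Real.logb]
    field_simp
  have e2 : Real.logb 2 (1 + A / B) = Real.log (1 + A / B) / Real.log 2 := rfl
  rw [e1, e2]
  exact div_le_div_of_nonneg_right H hL.le
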